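/- Assume there exist C₀, γ > 0 such that for every T > 0, every λ ≥ 0 and every y₀ ∈ E_λ, the associated heat solution satisfies ‖y(T)‖² ≤ (C₀/T) e^{2γλ + C₀/T} ∫₀^T ∫_ω |y(t,x)|² dμ(x) dt. Then there exists C > 0 such that for every η > 0, every T > γ + η, every ε > 0 and every y₀ ∈ L²(X,μ): D ‖y(T)‖² ≤ ε^{−β} ∫_{T−η}^T ∫_ω |y(t,x)|² dμ(x) dt + ε ‖y₀‖², where D = min{ e^{−C/η}/C , 1 } and β = γ / (T − (γ + η)). -/

import Mathlib

/-!
Split `y(T)` into its modes of frequency at most `l` and the rest. The low part is the solution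
at time `η` issued from the low modes of `y(T - η)`, an element of `E_l`, so the hypothesis bounds
it by `e^{2γl}` times its observation on `[0, η]`; that observation differs from the observation
of `y` on `[T - η, T]` only by high modes, which have already decayed by `e^{-l(T - η)}`. The high
part of `y(T)` has decayed by `e^{-lT}`. The cut-off `l = -log ε / (2(T - γ - η))` turns the
two resulting terms into `ε^{-β}` times the observation and `ε` times `‖y₀‖²`.
-/

open MeasureTheory

/-- The abstract heat semigroup solution `y(t) = ∑ⱼ e^{-λⱼ t} ⟨y₀, φⱼ⟩ φⱼ`
associated to a Hilbert basis `Φ` of `L²(X, μ)` and nonnegative spectrum `lam`. -/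
noncomputable def heatSol {X : Type*} [MeasurableSpace X] {μ : Measure X}
    (Φ : HilbertBasis ℕ ℝ (Lp ℝ 2 μ)) (lam : ℕ → ℝ) (y₀ : Lp ℝ 2 μ) (t : ℝ) :
    Lp ℝ 2 μ :=
  ∑' j, (Real.exp (-(lam j) * t) * (inner ℝ y₀ (Φ j) : ℝ)) • (Φ j : Lp ℝ 2 μ)

/-- The spectral subspace `E_l = span {φⱼ : λⱼ ≤ l}`. -/
noncomputable def specSpace {X : Type*} [MeasurableSpace X] {μ : Measure X}
    (Φ : HilbertBasis ℕ ℝ (Lp ℝ 2 μ)) (lam : ℕ → ℝ) (l : ℝ) :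
    Submodule ℝ (Lp ℝ 2 μ) :=
  Submodule.span ℝ {v | ∃ j, lam j ≤ l ∧ v = Φ j}

/-- The observation `∫_{t₁}^{t₂} ∫_ω |y(t,x)|² dμ(x) dt` of the heat solution on `ω`. -/
noncomputable def obsInt {X : Type*} [MeasurableSpace X] {μ : Measure X}
    (Φ : HilbertBasis ℕ ℝ (Lp ℝ 2 μ)) (lam : ℕ → ℝ) (ω : Set X)
    (y₀ : Lp ℝ 2 μ) (t₁ t₂ : ℝ) : ℝ :=
  ∫ t in Set.Ioc t₁ t₂, ∫ x in ω, (heatSol Φ lam y₀ t x) ^ 2 ∂μ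

open Real
open scoped RealInnerProductSpace

namespace HilbertBasis

variable {ι E : Type*} [NormedAddCommGroup E] [InnerProductSpace ℝ E] (Φ : HilbertBasis ι ℝ E)

theorem hasSum_sq_inner (v : E) : HasSum (fun j => ⟪v, Φ j⟫ ^ 2) (‖v‖ ^ 2) := by
  simpa only [sq, real_inner_comm v, real_inner_self_eq_norm_sq] using Φ.hasSum_inner_mul_inner v v

theorem eq_of_forall_inner_eq {u v : E} (h : ∀ j, ⟪u, Φ j⟫ = ⟪v, Φ j⟫) : u = v :=
  Φ.repr.injective <| lp.ext <| funext fun j => by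
    rw [Φ.repr_apply_apply, Φ.repr_apply_apply, real_inner_comm, h, real_inner_comm]

noncomputable def truncate (S : Finset ι) (v : E) : E :=
  ∑ j ∈ S, ⟪v, Φ j⟫ • Φ j

variable [DecidableEq ι]

theorem inner_truncate (S : Finset ι) (v : E) (k : ι) :
    ⟪Φ.truncate S v, Φ k⟫ = if k ∈ S then ⟪v, Φ k⟫ else 0 := by
  simp [truncate, sum_inner, real_inner_smul_left, orthonormal_iff_ite.mp Φ.orthonormal]

theorem inner_sub_truncate (S : Finset ι) (v : E) (k : ι) :
    ⟪v - Φ.truncate S v, Φ k⟫ = if k ∈ S then 0 else ⟪v, Φ k⟫ := by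
  rw [inner_sub_left, inner_truncate]
  split_ifs <;> ring

theorem norm_sq_eq_norm_truncate_sq_add (S : Finset ι) (v : E) :
    ‖v‖ ^ 2 = ‖Φ.truncate S v‖ ^ 2 + ‖v - Φ.truncate S v‖ ^ 2 := by
  refine (Φ.hasSum_sq_inner v).unique ?_
  convert (Φ.hasSum_sq_inner _).add (Φ.hasSum_sq_inner (v - Φ.truncate S v)) using 2 with k
  rw [inner_truncate, inner_sub_truncate]
  split_ifs <;> ring

end HilbertBasis

section HeatFlow

variable {X : Type*} [MeasurableSpace X] {μ : Measure X}
  (Φ : HilbertBasis ℕ ℝ (Lp ℝ 2 μ)) {lam : ℕ → ℝ}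

theorem exp_neg_mul_le_one {a t : ℝ} (ha : 0 ≤ a) (ht : 0 ≤ t) : exp (-a * t) ≤ 1 :=
  exp_le_one_iff.mpr (by nlinarith)

theorem memℓp_exp_mul_inner (hlam : ∀ j, 0 ≤ lam j) (u : Lp ℝ 2 μ) {t : ℝ} (ht : 0 ≤ t) :
    Memℓp (fun j => exp (-lam j * t) * ⟪u, Φ j⟫) 2 := by
  refine memℓp_gen <| (Φ.hasSum_sq_inner u).summable.of_nonneg_of_le (fun j => by positivity)
    fun j => ?_
  rw [ENNReal.toReal_ofNat, rpow_two, norm_mul, mul_pow, norm_of_nonneg (exp_pos _).le,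
    Real.norm_eq_abs, sq_abs]
  exact mul_le_of_le_one_left (sq_nonneg _)
    (pow_le_one₀ (exp_pos _).le (exp_neg_mul_le_one (hlam j) ht))

theorem inner_heatSol (hlam : ∀ j, 0 ≤ lam j) (u : Lp ℝ 2 μ) {t : ℝ} (ht : 0 ≤ t) (j : ℕ) :
    ⟪heatSol Φ lam u t, Φ j⟫ = exp (-lam j * t) * ⟪u, Φ j⟫ := by
  have hsum := (Φ.hasSum_repr_symm ⟨_, memℓp_exp_mul_inner Φ hlam u ht⟩).tsum_eq
  rw [heatSol, real_inner_comm, ← Φ.repr_apply_apply]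
  exact congrArg (fun v => Φ.repr v j) hsum |>.trans (by simp)

theorem heatSol_add (hlam : ∀ j, 0 ≤ lam j) (u : Lp ℝ 2 μ) {s t : ℝ} (hs : 0 ≤ s)
    (ht : 0 ≤ t) :
    heatSol Φ lam (heatSol Φ lam u s) t = heatSol Φ lam u (s + t) :=
  Φ.eq_of_forall_inner_eq fun j => by
    rw [inner_heatSol Φ hlam _ ht, inner_heatSol Φ hlam _ hs,
      inner_heatSol Φ hlam _ (add_nonneg hs ht), ← mul_assoc, ← exp_add]
    ring_nf

theorem heatSol_truncate (hlam : ∀ j, 0 ≤ lam j) (S : Finset ℕ) (u : Lp ℝ 2 μ) {t : ℝ}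
    (ht : 0 ≤ t) :
    heatSol Φ lam (Φ.truncate S u) t = Φ.truncate S (heatSol Φ lam u t) :=
  Φ.eq_of_forall_inner_eq fun j => by
    rw [inner_heatSol Φ hlam _ ht, Φ.inner_truncate, Φ.inner_truncate, inner_heatSol Φ hlam _ ht]
    split_ifs <;> simp

theorem norm_heatSol_sub_truncate_sq_le (hlam : ∀ j, 0 ≤ lam j) {S : Finset ℕ} {l : ℝ}
    (hS : ∀ j ∉ S, l ≤ lam j) (u : Lp ℝ 2 μ) {t : ℝ} (ht : 0 ≤ t) :
    ‖heatSol Φ lam u t - Φ.truncate S (heatSol Φ lam u t)‖ ^ 2 ≤ exp (-2 * l * t) * ‖u‖ ^ 2 := by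
  refine hasSum_le (fun j => ?_) (Φ.hasSum_sq_inner _) ((Φ.hasSum_sq_inner u).mul_left _)
  rw [Φ.inner_sub_truncate, inner_heatSol Φ hlam u ht]
  split_ifs with hj
  · rw [zero_pow two_ne_zero]
    positivity
  · rw [mul_pow, ← exp_nat_mul]
    exact mul_le_mul_of_nonneg_right (exp_le_exp.mpr (by push_cast; nlinarith [hS j hj]))
      (sq_nonneg _)

theorem norm_heatSol_sq_le (hlam : ∀ j, 0 ≤ lam j) (u : Lp ℝ 2 μ) {t : ℝ} (ht : 0 ≤ t) :
    ‖heatSol Φ lam u t‖ ^ 2 ≤ ‖u‖ ^ 2 := by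
  simpa [HilbertBasis.truncate] using
    norm_heatSol_sub_truncate_sq_le Φ hlam (S := ∅) (l := 0) (fun j _ => hlam j) u ht

theorem norm_heatSol_sub_sq (hlam : ∀ j, 0 ≤ lam j) (u : Lp ℝ 2 μ) {s t : ℝ} (hs : 0 ≤ s)
    (ht : 0 ≤ t) :
    ‖heatSol Φ lam u s - heatSol Φ lam u t‖ ^ 2
      = ∑' j, (exp (-lam j * s) - exp (-lam j * t)) ^ 2 * ⟪u, Φ j⟫ ^ 2 := by
  rw [← (Φ.hasSum_sq_inner _).tsum_eq]
  congr with j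
  rw [inner_sub_left, inner_heatSol Φ hlam u hs, inner_heatSol Φ hlam u ht]
  ring

theorem continuousOn_heatSol (hlam : ∀ j, 0 ≤ lam j) (u : Lp ℝ 2 μ) :
    ContinuousOn (heatSol Φ lam u) (Set.Ici 0) := by
  intro t₀ ht₀
  rw [ContinuousWithinAt, tendsto_iff_norm_sub_tendsto_zero]
  set f := fun t j => (exp (-lam j * t) - exp (-lam j * t₀)) ^ 2 * ⟪u, Φ j⟫ ^ 2
  have hf_lim (j : ℕ) : Filter.Tendsto (f · j) (nhdsWithin t₀ (Set.Ici 0)) (nhds 0) :=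
    ((by fun_prop : Continuous (f · j)).tendsto' t₀ 0 (by simp [f])).mono_left
      nhdsWithin_le_nhds
  have hf_le : ∀ᶠ t in nhdsWithin t₀ (Set.Ici 0), ∀ j, ‖f t j‖ ≤ ⟪u, Φ j⟫ ^ 2 :=
    eventually_nhdsWithin_of_forall fun t ht j => by
      have hdiff : |exp (-lam j * t) - exp (-lam j * t₀)| ≤ 1 :=
        abs_sub_le_of_nonneg_of_le (exp_pos _).le (exp_neg_mul_le_one (hlam j) ht)
          (exp_pos _).le (exp_neg_mul_le_one (hlam j) ht₀)
      rw [norm_of_nonneg (by positivity)]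
      exact mul_le_of_le_one_left (sq_nonneg _) ((sq_le_one_iff_abs_le_one _).mpr hdiff)
  have hsq := tendsto_tsum_of_dominated_convergence (Φ.hasSum_sq_inner u).summable hf_lim hf_le
  rw [tsum_zero] at hsq
  have hnorm_sq : Filter.Tendsto (fun t => ‖heatSol Φ lam u t - heatSol Φ lam u t₀‖ ^ 2)
      (nhdsWithin t₀ (Set.Ici 0)) (nhds 0) :=
    hsq.congr' <| eventually_nhdsWithin_of_forall fun t ht =>
      (norm_heatSol_sub_sq Φ hlam u ht ht₀).symm
  simpa using hnorm_sq.sqrt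

end HeatFlow

section Observation

variable {X : Type*} [MeasurableSpace X] {μ : Measure X}

theorem integral_sq_eq_norm_sq (u : Lp ℝ 2 μ) : ∫ x, u x ^ 2 ∂μ = ‖u‖ ^ 2 := by
  rw [← real_inner_self_eq_norm_sq, L2.inner_def]
  simp [sq]

theorem setIntegral_sq_eq_norm_sq_restrict (ω : Set X) (u : Lp ℝ 2 μ) :
    ∫ x in ω, u x ^ 2 ∂μ = ‖LpToLpRestrictCLM X ℝ ℝ μ 2 ω u‖ ^ 2 := by
  rw [← integral_sq_eq_norm_sq]
  refine integral_congr_ae ?_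
  filter_upwards [LpToLpRestrictCLM_coeFn ℝ ω u] with x hx
  rw [hx]

theorem continuous_setIntegral_sq (ω : Set X) :
    Continuous fun u : Lp ℝ 2 μ => ∫ x in ω, u x ^ 2 ∂μ := by
  simp_rw [setIntegral_sq_eq_norm_sq_restrict]
  fun_prop

theorem setIntegral_sq_sub_le (ω : Set X) (v q : Lp ℝ 2 μ) :
    ∫ x in ω, (v - q) x ^ 2 ∂μ ≤ 2 * ∫ x in ω, v x ^ 2 ∂μ + 2 * ‖q‖ ^ 2 := by
  simp_rw [setIntegral_sq_eq_norm_sq_restrict, map_sub]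
  set R := LpToLpRestrictCLM X ℝ ℝ μ 2 ω
  have hq : ‖R q‖ ≤ ‖q‖ := norm_Lp_toLp_restrict_le ω q
  nlinarith [norm_sub_le (R v) (R q), norm_nonneg (R q), norm_nonneg (R v - R q),
    sq_nonneg (‖R v‖ - ‖R q‖)]

variable (Φ : HilbertBasis ℕ ℝ (Lp ℝ 2 μ)) {lam : ℕ → ℝ} (ω : Set X)

theorem integrableOn_setIntegral_sq_heatSol (hlam : ∀ j, 0 ≤ lam j) (u : Lp ℝ 2 μ) {a : ℝ}
    (ha : 0 ≤ a) (b : ℝ) :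
    IntegrableOn (fun t => ∫ x in ω, heatSol Φ lam u t x ^ 2 ∂μ) (Set.Ioc a b) := by
  refine (ContinuousOn.integrableOn_Icc ?_).mono_set Set.Ioc_subset_Icc_self
  exact (continuous_setIntegral_sq ω).comp_continuousOn
    ((continuousOn_heatSol Φ hlam u).mono fun t ht => ha.trans ht.1)

theorem obsInt_nonneg (u : Lp ℝ 2 μ) (a b : ℝ) : 0 ≤ obsInt Φ lam ω u a b :=
  integral_nonneg fun _ => integral_nonneg fun _ => sq_nonneg _

theorem obsInt_heatSol (hlam : ∀ j, 0 ≤ lam j) (u : Lp ℝ 2 μ) {a t₁ t₂ : ℝ} (ha : 0 ≤ a)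
    (ht₁ : 0 ≤ t₁) (ht : t₁ ≤ t₂) :
    obsInt Φ lam ω (heatSol Φ lam u a) t₁ t₂ = obsInt Φ lam ω u (a + t₁) (a + t₂) := by
  rw [obsInt, obsInt, ← intervalIntegral.integral_of_le ht,
    ← intervalIntegral.integral_of_le (by linarith), ← intervalIntegral.integral_comp_add_left]
  refine intervalIntegral.integral_congr fun t ht => ?_
  rw [Set.uIcc_of_le ‹_›] at ht
  simp only [heatSol_add Φ hlam u ha (ht₁.trans ht.1)]

theorem obsInt_truncate_le (hlam : ∀ j, 0 ≤ lam j) {S : Finset ℕ} {l : ℝ}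
    (hS : ∀ j ∉ S, l ≤ lam j) (hl : 0 ≤ l) (u : Lp ℝ 2 μ) {a b : ℝ} (ha : 0 ≤ a) (hab : a ≤ b) :
    obsInt Φ lam ω (Φ.truncate S u) a b
      ≤ 2 * obsInt Φ lam ω u a b + 2 * (b - a) * (exp (-2 * l * a) * ‖u‖ ^ 2) := by
  set E := exp (-2 * l * a) * ‖u‖ ^ 2
  have hpointwise : ∀ s ∈ Set.Ioc a b, ∫ x in ω, heatSol Φ lam (Φ.truncate S u) s x ^ 2 ∂μ
      ≤ 2 * ∫ x in ω, heatSol Φ lam u s x ^ 2 ∂μ + 2 * E := by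
    intro s hs
    set y := heatSol Φ lam u s
    have hhigh : ‖y - Φ.truncate S y‖ ^ 2 ≤ E :=
      (norm_heatSol_sub_truncate_sq_le Φ hlam hS u (ha.trans hs.1.le)).trans
        (mul_le_mul_of_nonneg_right (exp_le_exp.mpr (by nlinarith [hs.1])) (sq_nonneg _))
    have hy : heatSol Φ lam (Φ.truncate S u) s = y - (y - Φ.truncate S y) := by
      rw [heatSol_truncate Φ hlam S u (ha.trans hs.1.le), sub_sub_cancel]
    rw [hy]
    linarith [setIntegral_sq_sub_le ω y (y - Φ.truncate S y)]
  have hobs := (integrableOn_setIntegral_sq_heatSol Φ ω hlam u ha b).const_mul 2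
  have hconst : IntegrableOn (fun _ => 2 * E) (Set.Ioc a b) := integrableOn_const (by simp)
  calc obsInt Φ lam ω (Φ.truncate S u) a b
      ≤ ∫ s in Set.Ioc a b, (2 * ∫ x in ω, heatSol Φ lam u s x ^ 2 ∂μ + 2 * E) :=
        integral_mono_of_nonneg (ae_of_all _ fun _ => integral_nonneg fun _ => sq_nonneg _)
          (hobs.add hconst) ((ae_restrict_iff' measurableSet_Ioc).mpr (ae_of_all _ hpointwise))
    _ = _ := by
        rw [integral_add hobs hconst, integral_const_mul, setIntegral_const,
          Real.volume_real_Ioc_of_le hab, smul_eq_mul, obsInt]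
        ring

end Observation

section Observability

variable {X : Type*} [MeasurableSpace X] {μ : Measure X}
  (Φ : HilbertBasis ℕ ℝ (Lp ℝ 2 μ)) {lam : ℕ → ℝ} (ω : Set X)

theorem truncate_mem_specSpace {S : Finset ℕ} {l : ℝ} (hS : ∀ j ∈ S, lam j ≤ l)
    (v : Lp ℝ 2 μ) : Φ.truncate S v ∈ specSpace Φ lam l :=
  Submodule.sum_mem _ fun j hj =>
    Submodule.smul_mem _ _ (Submodule.subset_span ⟨j, hS j hj, rfl⟩)

theorem norm_heatSol_sq_le_of_observable_specSpace (hlam : ∀ j, 0 ≤ lam j)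
    (hlamtop : Filter.Tendsto lam Filter.atTop Filter.atTop) {l K η T : ℝ} (hl : 0 ≤ l)
    (hK : 0 ≤ K) (hη : 0 ≤ η) (hηT : η ≤ T)
    (hobs : ∀ z ∈ specSpace Φ lam l, ‖heatSol Φ lam z η‖ ^ 2 ≤ K * obsInt Φ lam ω z 0 η)
    (u : Lp ℝ 2 μ) :
    ‖heatSol Φ lam u T‖ ^ 2 ≤ K * (2 * obsInt Φ lam ω u (T - η) T
      + 2 * η * (exp (-2 * l * (T - η)) * ‖u‖ ^ 2)) + exp (-2 * l * T) * ‖u‖ ^ 2 := by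
  have hfin : {j | lam j ≤ l}.Finite := by
    have := (Nat.cofinite_eq_atTop ▸ hlamtop).eventually_gt_atTop l
    simpa only [Filter.eventually_cofinite, not_lt] using this
  set S := hfin.toFinset
  have hS_low : ∀ j ∈ S, lam j ≤ l := fun j hj => hfin.mem_toFinset.mp hj
  have hS_high : ∀ j ∉ S, l ≤ lam j := fun j hj =>
    (not_le.mp fun h => hj (hfin.mem_toFinset.mpr h)).le
  have hTη : 0 ≤ T - η := sub_nonneg.mpr hηT
  have hlow := hobs _ (truncate_mem_specSpace Φ hS_low (heatSol Φ lam u (T - η)))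
  rw [← heatSol_truncate Φ hlam S u hTη, heatSol_add Φ hlam _ hTη hη,
    obsInt_heatSol Φ ω hlam _ hTη le_rfl hη, add_zero, sub_add_cancel,
    heatSol_truncate Φ hlam S u (hη.trans hηT)] at hlow
  have hcost := obsInt_truncate_le Φ ω hlam hS_high hl u hTη (sub_le_self T hη)
  rw [sub_sub_cancel] at hcost
  have hhigh := norm_heatSol_sub_truncate_sq_le Φ hlam hS_high u (hη.trans hηT)
  rw [Φ.norm_sq_eq_norm_truncate_sq_add S]
  linarith [mul_le_mul_of_nonneg_left hcost hK]

theorem norm_heatSol_sq_le_rpow_of_lt_one (hlam : ∀ j, 0 ≤ lam j)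
    (hlamtop : Filter.Tendsto lam Filter.atTop Filter.atTop) {C₀ γ : ℝ} (hC₀ : 0 ≤ C₀)
    (hγ : 0 ≤ γ)
    (hobs : ∀ T > (0 : ℝ), ∀ l ≥ (0 : ℝ), ∀ y₀ ∈ specSpace Φ lam l,
      ‖heatSol Φ lam y₀ T‖ ^ 2 ≤ (C₀ / T) * exp (2 * γ * l + C₀ / T) * obsInt Φ lam ω y₀ 0 T)
    {η T ε : ℝ} (hη : 0 < η) (hT : γ + η < T) (hε : 0 < ε) (hε1 : ε < 1) (u : Lp ℝ 2 μ) :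
    ‖heatSol Φ lam u T‖ ^ 2 ≤ 2 * C₀ * exp (C₀ / η) *
      (ε ^ (-(γ / (T - (γ + η)))) * obsInt Φ lam ω u (T - η) T / η + ε * ‖u‖ ^ 2)
        + ε * ‖u‖ ^ 2 := by
  set δ := T - (γ + η)
  have hδ : 0 < δ := sub_pos.mpr hT
  set l := -log ε / (2 * δ)
  have hl : 0 ≤ l := div_nonneg (neg_nonneg.mpr (log_nonpos hε.le hε1.le)) (by positivity)
  have hmain := norm_heatSol_sq_le_of_observable_specSpace Φ ω hlam hlamtop hl
    (T := T) (by positivity) hη.le (by linarith) (hobs η hη l hl) u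
  have hcost : exp (2 * γ * l) = ε ^ (-(γ / δ)) := by
    rw [rpow_def_of_pos hε]
    congr 1
    simp only [l]
    field_simp
  have hdecay : exp (-2 * l * δ) = ε := by
    rw [show -2 * l * δ = log ε by simp only [l]; field_simp, exp_log hε]
  have hcost_decay : exp (2 * γ * l) * exp (-2 * l * (T - η)) = ε := by
    rw [← exp_add, ← hdecay]
    congr 1
    simp only [δ]
    ring
  have hdecay_T : exp (-2 * l * T) ≤ ε := hdecay ▸ exp_le_exp.mpr (by nlinarith)
  calc ‖heatSol Φ lam u T‖ ^ 2
      ≤ C₀ / η * exp (2 * γ * l + C₀ / η) * (2 * obsInt Φ lam ω u (T - η) T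
          + 2 * η * (exp (-2 * l * (T - η)) * ‖u‖ ^ 2)) + exp (-2 * l * T) * ‖u‖ ^ 2 := hmain
    _ = 2 * C₀ * exp (C₀ / η) * (exp (2 * γ * l) * obsInt Φ lam ω u (T - η) T / η
          + exp (2 * γ * l) * exp (-2 * l * (T - η)) * ‖u‖ ^ 2) + exp (-2 * l * T) * ‖u‖ ^ 2 := by
        rw [exp_add]
        field_simp
    _ ≤ _ := by
        rw [hcost_decay, hcost]
        gcongr

theorem norm_heatSol_sq_le_rpow (hlam : ∀ j, 0 ≤ lam j)
    (hlamtop : Filter.Tendsto lam Filter.atTop Filter.atTop) {C₀ γ : ℝ} (hC₀ : 0 ≤ C₀)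
    (hγ : 0 ≤ γ)
    (hobs : ∀ T > (0 : ℝ), ∀ l ≥ (0 : ℝ), ∀ y₀ ∈ specSpace Φ lam l,
      ‖heatSol Φ lam y₀ T‖ ^ 2 ≤ (C₀ / T) * exp (2 * γ * l + C₀ / T) * obsInt Φ lam ω y₀ 0 T)
    {η T ε : ℝ} (hη : 0 < η) (hT : γ + η < T) (hε : 0 < ε) (u : Lp ℝ 2 μ) :
    ‖heatSol Φ lam u T‖ ^ 2 ≤ (2 * C₀ + 1) * exp (C₀ / η) *
      (ε ^ (-(γ / (T - (γ + η)))) * obsInt Φ lam ω u (T - η) T / η + ε * ‖u‖ ^ 2) := by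
  have hPO : 0 ≤ ε ^ (-(γ / (T - (γ + η)))) * obsInt Φ lam ω u (T - η) T / η :=
    div_nonneg (mul_nonneg (rpow_pos_of_pos hε _).le (obsInt_nonneg Φ ω u _ _)) hη.le
  have he : 1 ≤ exp (C₀ / η) := one_le_exp (div_nonneg hC₀ hη.le)
  have hεu := le_mul_of_one_le_left (by positivity : 0 ≤ ε * ‖u‖ ^ 2) he
  rcases le_or_gt 1 ε with hε1 | hε1
  · have hcontr := norm_heatSol_sq_le Φ hlam u (t := T) (by linarith)
    have hu : ‖u‖ ^ 2 ≤ ε * ‖u‖ ^ 2 := le_mul_of_one_le_left (sq_nonneg _) hε1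
    nlinarith [mul_nonneg (exp_pos (C₀ / η)).le hPO]
  · have := norm_heatSol_sq_le_rpow_of_lt_one Φ ω hlam hlamtop hC₀ hγ hobs hη hT hε hε1 u
    nlinarith [mul_nonneg (exp_pos (C₀ / η)).le hPO]

end Observability

theorem exp_neg_inv_le_self {η : ℝ} (hη : 0 < η) : exp (-1 / η) ≤ η := by
  rw [neg_div, exp_neg, inv_le_comm₀ (exp_pos _) hη, ← one_div]
  linarith [add_one_le_exp (1 / η)]

theorem min_mul_le_exp_neg_inv {C₀ η : ℝ} (hC₀ : 0 ≤ C₀) (hη : 0 < η) :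
    min (exp (-(2 * C₀ + 1) / η) / (2 * C₀ + 1)) 1 * ((2 * C₀ + 1) * exp (C₀ / η))
      ≤ exp (-1 / η) := by
  calc _ ≤ exp (-(2 * C₀ + 1) / η) / (2 * C₀ + 1) * ((2 * C₀ + 1) * exp (C₀ / η)) := by
        gcongr
        exact min_le_left _ _
    _ = exp (-(C₀ + 1) / η) := by
        field_simp
        rw [← exp_add]
        ring_nf
    _ ≤ exp (-1 / η) := by
        gcongr
        linarith

theorem statement9_general {X : Type*} [MeasurableSpace X] (μ : Measure X)
    (ω : Set X)
    (Φ : HilbertBasis ℕ ℝ (Lp ℝ 2 μ)) (lam : ℕ → ℝ)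
    (hlam : ∀ j, 0 ≤ lam j)
    (hlamtop : Filter.Tendsto lam Filter.atTop Filter.atTop)
    (C₀ γ : ℝ) (hC₀ : 0 < C₀) (hγ : 0 < γ)
    (hobs : ∀ T > (0 : ℝ), ∀ l ≥ (0 : ℝ), ∀ y₀ ∈ specSpace Φ lam l,
      ‖heatSol Φ lam y₀ T‖ ^ 2 ≤
        (C₀ / T) * Real.exp (2 * γ * l + C₀ / T) * obsInt Φ lam ω y₀ 0 T) :
    ∃ C > (0 : ℝ), ∀ η > (0 : ℝ), ∀ T : ℝ, γ + η < T → ∀ ε > (0 : ℝ),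
      ∀ y₀ : Lp ℝ 2 μ,
        min (Real.exp (-C / η) / C) 1 * ‖heatSol Φ lam y₀ T‖ ^ 2 ≤
          ε ^ (-(γ / (T - (γ + η)))) * obsInt Φ lam ω y₀ (T - η) T
            + ε * ‖y₀‖ ^ 2 := by
  refine ⟨2 * C₀ + 1, by linarith, fun η hη T hT ε hε y₀ => ?_⟩
  set D := min (exp (-(2 * C₀ + 1) / η) / (2 * C₀ + 1)) 1
  set K := (2 * C₀ + 1) * exp (C₀ / η)
  set P := ε ^ (-(γ / (T - (γ + η))))
  set O := obsInt Φ lam ω y₀ (T - η) T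
  have hD : 0 ≤ D := le_min (by positivity) zero_le_one
  have hDK : D * K ≤ min η 1 := (min_mul_le_exp_neg_inv hC₀.le hη).trans
    (le_min (exp_neg_inv_le_self hη) (exp_le_one_iff.mpr (by rw [neg_div]; simp [hη.le])))
  have hbound := norm_heatSol_sq_le_rpow Φ ω hlam hlamtop hC₀.le hγ.le hobs hη hT hε y₀
  have hPO : 0 ≤ P * O := mul_nonneg (rpow_pos_of_pos hε _).le (obsInt_nonneg Φ ω y₀ _ _)
  calc D * ‖heatSol Φ lam y₀ T‖ ^ 2 ≤ D * K * (P * O / η) + D * K * (ε * ‖y₀‖ ^ 2) := by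
        rw [← mul_add, mul_assoc]
        exact mul_le_mul_of_nonneg_left hbound hD
    _ ≤ η * (P * O / η) + 1 * (ε * ‖y₀‖ ^ 2) := by
        gcongr
        · exact hDK.trans (min_le_left _ _)
        · exact hDK.trans (min_le_right _ _)
    _ = P * O + ε * ‖y₀‖ ^ 2 := by
        field_simp

/-- Large-time approximate final-state observability (abstract spectral form,
case `k = 2`): from the low-frequency observability estimate with cost
`(C₀/T) e^{2γλ + C₀/T}`, one gets, for `T > γ + η`,
`D ‖y(T)‖² ≤ ε^{-β} ∫_{T-η}^T ∫_ω |y|² + ε ‖y₀‖²` with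
`D = min{e^{-C/η}/C, 1}` and `β = γ/(T-(γ+η))`. -/
theorem statement9 {X : Type*} [MeasurableSpace X] (μ : Measure X)
    (ω : Set X) (hω : MeasurableSet ω)
    (Φ : HilbertBasis ℕ ℝ (Lp ℝ 2 μ)) (lam : ℕ → ℝ)
    (hlam : ∀ j, 0 ≤ lam j)
    (hlamtop : Filter.Tendsto lam Filter.atTop Filter.atTop)
    (C₀ γ : ℝ) (hC₀ : 0 < C₀) (hγ : 0 < γ)
    (hobs : ∀ T > (0 : ℝ), ∀ l ≥ (0 : ℝ), ∀ y₀ ∈ specSpace Φ lam l,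
      ‖heatSol Φ lam y₀ T‖ ^ 2 ≤
        (C₀ / T) * Real.exp (2 * γ * l + C₀ / T) * obsInt Φ lam ω y₀ 0 T) :
    ∃ C > (0 : ℝ), ∀ η > (0 : ℝ), ∀ T : ℝ, γ + η < T → ∀ ε > (0 : ℝ),
      ∀ y₀ : Lp ℝ 2 μ,
        min (Real.exp (-C / η) / C) 1 * ‖heatSol Φ lam y₀ T‖ ^ 2 ≤
          ε ^ (-(γ / (T - (γ + η)))) * obsInt Φ lam ω y₀ (T - η) T
            + ε * ‖y₀‖ ^ 2 :=
  statement9_general μ ω Φ lam hlam hlamtop C₀ γ hC₀ hγ hobs
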